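/- Let c be a real number with 0 ≤ c < 1 and n a positive integer. Let G be the n×n real matrix with entries G_{ij} = c^{|i−j|} and H the n×n real matrix with entries H_{ij} = δ_{i,j+1} + δ_{j,i+1} + c(δ_{i,1}δ_{j,1} + δ_{i,n}δ_{j,n}). If v ∈ ℝ^n is nonzero, t is real with 1 − 2ct + c² ≠ 0, and H v = 2t·v, then G v = ((1−c²)/(1 − 2ct + c²))·v. In particular every eigenvector of H with eigenvalue 2cos θ is an eigenvector of G with eigenvalue (1−c²)/(1 − 2c·cos θ + c²). -/

import Mathlib

/-!
The Kac–Murdock–Szegő matrix `G = (c^|i-k|)` has a tridiagonal inverse: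
`G ((1 + c²) I - c H) = (1 - c²) I`. In the interior this is the three-term identity
`(1 + c²) c^|m| - c (c^|m-1| + c^|m+1|) = (1 - c²) δ_{m,0}`; at the two ends the corner
entries `c` of `H` supply the missing neighbours, because `c · c^i = c^(i+1)` is exactly the
value the sequence `c^|i-k|` would take at the ghost index `k = -1` (and likewise at `k = n`).
An eigenvector of `H` with eigenvalue `2t` is therefore an eigenvector of
`(1 + c²) I - c H` with eigenvalue `1 - 2ct + c²`, hence of `G`.
-/

open Matrix

noncomputable def kmsMatrix (c : ℝ) (n : ℕ) : Matrix (Fin n) (Fin n) ℝ :=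
  of fun i j => c ^ Nat.dist i j

def kmsTridiagonal (c : ℝ) (n : ℕ) : Matrix (Fin n) (Fin n) ℝ :=
  of fun i j => (if i.1 = j.1 + 1 then 1 else 0) + (if j.1 = i.1 + 1 then 1 else 0)
    + c * ((if i.1 = 0 ∧ j.1 = 0 then 1 else 0) + (if i.1 = n - 1 ∧ j.1 = n - 1 then 1 else 0))

theorem Matrix.mulVec_eq_smul_of_mul_eq_smul_one {K m : Type*} [Field K] [Fintype m]
    [DecidableEq m] {A B : Matrix m m K} {μ ν : K} {v : m → K} (hAB : A * B = μ • 1)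
    (hv : B *ᵥ v = ν • v) (hν : ν ≠ 0) : A *ᵥ v = (μ / ν) • v := by
  have h : ν • (A *ᵥ v) = μ • v := by
    rw [← mulVec_smul, ← hv, mulVec_mulVec, hAB, smul_mulVec, one_mulVec]
  rw [div_eq_inv_mul, mul_smul, ← h, inv_smul_smul₀ hν]

lemma kms_recurrence (c : ℝ) (i k : ℕ) :
    (1 + c ^ 2) * c ^ Nat.dist i k - c * (c ^ Nat.dist (i + 1) k + c ^ Nat.dist i (k + 1))
      = (1 - c ^ 2) * if i = k then 1 else 0 := by
  rcases lt_trichotomy i k with hlt | rfl | hgt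
  · obtain ⟨a, rfl⟩ := Nat.exists_eq_add_of_lt hlt
    rw [Nat.dist_eq_sub_of_le (by omega), Nat.dist_eq_sub_of_le (by omega),
      Nat.dist_eq_sub_of_le (by omega), if_neg (by omega), show i + a + 1 - i = a + 1 by omega,
      show i + a + 1 - (i + 1) = a by omega, show i + a + 1 + 1 - i = a + 2 by omega]
    ring
  · simp [Nat.dist]
    ring
  · obtain ⟨a, rfl⟩ := Nat.exists_eq_add_of_lt hgt
    rw [Nat.dist_comm, Nat.dist_eq_sub_of_le (by omega), Nat.dist_comm,
      Nat.dist_eq_sub_of_le (by omega), Nat.dist_comm, Nat.dist_eq_sub_of_le (by omega),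
      if_neg (by omega), show k + a + 1 - k = a + 1 by omega,
      show k + a + 1 + 1 - k = a + 2 by omega, show k + a + 1 - (k + 1) = a by omega]
    ring

-- `Nat.dist (i + 1) k` is `|i - (k - 1)|`, written so that no subtraction truncates at `k = 0`.
lemma kmsMatrix_mul_kmsTridiagonal_apply (c : ℝ) {n : ℕ} (i k : Fin n) :
    (kmsMatrix c n * kmsTridiagonal c n) i k
      = c ^ Nat.dist (i + 1) k + c ^ Nat.dist i (k + 1) := by
  have hi := i.2
  have hk := k.2
  simp only [mul_apply, kmsMatrix, kmsTridiagonal, of_apply]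
  rw [Fin.sum_univ_eq_sum_range (fun j => c ^ Nat.dist i j * ((if j = k.1 + 1 then 1 else 0)
    + (if k.1 = j + 1 then 1 else 0)
    + c * ((if j = 0 ∧ k.1 = 0 then 1 else 0) + (if j = n - 1 ∧ k.1 = n - 1 then 1 else 0))))]
  simp only [mul_add, mul_ite, mul_one, mul_zero, Finset.sum_add_distrib, ite_and,
    Finset.sum_ite_eq', Finset.mem_range, if_pos (show 0 < n by omega),
    if_pos (show n - 1 < n by omega)]
  have left : (∑ j ∈ Finset.range n, if (k : ℕ) = j + 1 then c ^ Nat.dist i j else 0)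
      + (if (k : ℕ) = 0 then c ^ Nat.dist i 0 * c else 0) = c ^ Nat.dist (i + 1) k := by
    obtain ⟨k, hk⟩ := k
    cases k with
    | zero => simp [Nat.dist, pow_succ]
    | succ k =>
      simp only [add_left_inj, Finset.sum_ite_eq, Finset.mem_range, if_pos (show k < n by omega)]
      simp [Nat.dist_succ_succ]
  have right : (if (k : ℕ) + 1 < n then c ^ Nat.dist i (k + 1) else 0)
      + (if (k : ℕ) = n - 1 then c ^ Nat.dist i (n - 1) * c else 0) = c ^ Nat.dist i (k + 1) := by
    by_cases hkn : (k : ℕ) + 1 < n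
    · simp [hkn, show (k : ℕ) ≠ n - 1 by omega]
    · rw [if_neg hkn, if_pos (by omega), show (k : ℕ) = n - 1 by omega,
        Nat.dist_eq_sub_of_le (by omega), Nat.dist_eq_sub_of_le (by omega),
        show n - 1 + 1 - i = n - 1 - i + 1 by omega, pow_succ, zero_add]
  linear_combination left + right

lemma kmsMatrix_mul_sub_smul_kmsTridiagonal (c : ℝ) (n : ℕ) :
    kmsMatrix c n * ((1 + c ^ 2) • 1 - c • kmsTridiagonal c n) = (1 - c ^ 2) • 1 := by
  ext i k
  rw [Matrix.mul_sub, Matrix.mul_smul, Matrix.mul_smul, Matrix.mul_one, Matrix.sub_apply,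
    Matrix.smul_apply, Matrix.smul_apply, kmsMatrix_mul_kmsTridiagonal_apply,
    Matrix.smul_apply, one_apply]
  simp only [kmsMatrix, of_apply, smul_eq_mul, Fin.ext_iff]
  linear_combination kms_recurrence c i k

theorem eigenvector_of_H_is_eigenvector_of_G_general
    (c : ℝ) (n : ℕ)
    (G H : Matrix (Fin n) (Fin n) ℝ)
    (hGdef : ∀ i j, G i j = c ^ Nat.dist i.1 j.1)
    (hHdef : ∀ i j, H i j =
      (if i.1 = j.1 + 1 then 1 else 0) + (if j.1 = i.1 + 1 then 1 else 0)
        + c * ((if i.1 = 0 ∧ j.1 = 0 then 1 else 0)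
          + (if i.1 = n - 1 ∧ j.1 = n - 1 then 1 else 0)))
    (v : Fin n → ℝ)
    (t : ℝ) (ht : 1 - 2 * c * t + c ^ 2 ≠ 0)
    (hev : H.mulVec v = (2 * t) • v) :
    G.mulVec v = ((1 - c ^ 2) / (1 - 2 * c * t + c ^ 2)) • v := by
  obtain rfl : G = kmsMatrix c n := ext hGdef
  obtain rfl : H = kmsTridiagonal c n := ext hHdef
  refine mulVec_eq_smul_of_mul_eq_smul_one (kmsMatrix_mul_sub_smul_kmsTridiagonal c n) ?_ ht
  rw [sub_mulVec, smul_mulVec, smul_mulVec, one_mulVec, hev, smul_smul, ← sub_smul]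
  congr 1
  ring

/-- every eigenvector of `H` with eigenvalue `2t` is an eigenvector of the
Gram matrix `G` with eigenvalue `(1−c²)/(1−2ct+c²)`. -/
theorem eigenvector_of_H_is_eigenvector_of_G
    (c : ℝ) (hc0 : 0 ≤ c) (hc1 : c < 1) (n : ℕ) (hn : 0 < n)
    (G H : Matrix (Fin n) (Fin n) ℝ)
    (hGdef : ∀ i j, G i j = c ^ Nat.dist i.1 j.1)
    (hHdef : ∀ i j, H i j =
      (if i.1 = j.1 + 1 then 1 else 0) + (if j.1 = i.1 + 1 then 1 else 0)
        + c * ((if i.1 = 0 ∧ j.1 = 0 then 1 else 0)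
          + (if i.1 = n - 1 ∧ j.1 = n - 1 then 1 else 0)))
    (v : Fin n → ℝ) (hv : v ≠ 0)
    (t : ℝ) (ht : 1 - 2 * c * t + c ^ 2 ≠ 0)
    (hev : H.mulVec v = (2 * t) • v) :
    G.mulVec v = ((1 - c ^ 2) / (1 - 2 * c * t + c ^ 2)) • v :=
  eigenvector_of_H_is_eigenvector_of_G_general c n G H hGdef hHdef v t ht hev
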